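/- There exist constants C > 0 and δ₀ ∈ (0,1) such that for all δ ∈ (0, δ₀), all s ∈ ℝ with |s| < δ, and all g ∈ SL₂(ℝ) with ‖g‖ > 3, g·i ≠ i and (a_s g)·i ≠ i, one has |θ_{a_s g} − θ_g| ≤ C·δ. -/

import Mathlib

open Matrix MeasureTheory Real Filter Topology
open scoped MatrixGroups Pointwise

noncomputable section

/-- `SL(2,ℝ)` as the special linear group of 2×2 real matrices. -/
abbrev SL2R := Matrix.SpecialLinearGroup (Fin 2) ℝ

instance : TopologicalSpace SL2R :=
  show TopologicalSpace {A : Matrix (Fin 2) (Fin 2) ℝ // A.det = 1} from inferInstance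

instance : MeasurableSpace SL2R := borel SL2R

/-- Squared Frobenius norm `‖g‖² = a² + b² + c² + d²`. -/
def fnormSq (g : SL2R) : ℝ :=
  (g : Matrix (Fin 2) (Fin 2) ℝ) 0 0 ^ 2 + (g : Matrix (Fin 2) (Fin 2) ℝ) 0 1 ^ 2
    + (g : Matrix (Fin 2) (Fin 2) ℝ) 1 0 ^ 2 + (g : Matrix (Fin 2) (Fin 2) ℝ) 1 1 ^ 2

/-- Frobenius norm `‖g‖`. -/
def fnorm (g : SL2R) : ℝ := Real.sqrt (fnormSq g)

/-- The angle `θ_g = arg((g·i − i)/(g·i + i)) ∈ (−π, π]`; equals `0` when `g·i = i`. -/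
def theta (g : SL2R) : ℝ :=
  Complex.arg ((((g • UpperHalfPlane.I : UpperHalfPlane) : ℂ) - Complex.I)
    / (((g • UpperHalfPlane.I : UpperHalfPlane) : ℂ) + Complex.I))

/-- Distance between two angles: the distance from `a − b` to the nearest element of `2πℤ`. -/
def angDist (a b : ℝ) : ℝ := |((a - b : ℝ) : Real.Angle).toReal|

/-- Inverse hyperbolic cosine. -/
def arccosh (x : ℝ) : ℝ := Real.log (x + Real.sqrt (x ^ 2 - 1))

/-- `ℓ(M) = arccosh(‖M‖²/2)`, the hyperbolic distance from `i` to `M·i`. -/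
def ell (M : SL2R) : ℝ := arccosh (fnormSq M / 2)

/-- The pair-correlation density building block `f_ξ(ℓ)`. -/
def fxi (ξ l : ℝ) : ℝ :=
  if Real.sinh l ≤ ξ then 2 / ξ ^ 2 * l
  else if 2 * Real.sinh (l / 2) ≤ ξ then
    2 / ξ ^ 2 * (l + Real.log (1 + ξ ^ 2)
      - 2 * Real.log (Real.cosh l + Real.sqrt (Real.sinh l ^ 2 - ξ ^ 2)))
  else 2 / ξ ^ 2 * (l - Real.log (Real.cosh l + Real.sqrt (Real.sinh l ^ 2 - ξ ^ 2)))

/-- The rotation matrix `k_φ ∈ SL(2,ℝ)`. -/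
def kMat (φ : ℝ) : SL2R :=
  ⟨!![Real.cos (φ / 2), Real.sin (φ / 2); -Real.sin (φ / 2), Real.cos (φ / 2)], by
    rw [Matrix.det_fin_two_of]
    linear_combination Real.sin_sq_add_cos_sq (φ / 2)⟩

/-- The diagonal matrix `a_t ∈ SL(2,ℝ)`. -/
def aMat (t : ℝ) : SL2R :=
  ⟨!![Real.exp (t / 2), 0; 0, Real.exp (-t / 2)], by
    rw [Matrix.det_fin_two_of, ← Real.exp_add]
    norm_num
    ring⟩


/-! Under the Cayley map `w(z) = (z - i)/(z + i)` onto the disc, `θ_g = arg w(g·i)`, and `a_s`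
acts on `g·i` as multiplication by `e^s`. On the upper half-plane
`|w(e^s z) - w(z)| ≤ 2|e^s - 1| ≤ 4|s|`, while `|w(g·i)|² = (‖g‖² - 2)/(‖g‖² + 2) ≥ 1/4` once
`‖g‖² ≥ 10/3`. Since `|arg ζ| ≤ π|ζ - 1|` for every `ζ`, the angle between `w(a_s g·i)` and
`w(g·i)` is at most `π · 4|s| / (1/2) ≤ 8πδ`. -/

namespace Complex

theorem abs_arg_le_pi_mul_norm_sub_one (z : ℂ) : |arg z| ≤ π * ‖z - 1‖ := by
  rcases eq_or_ne z 0 with rfl | hz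
  · simpa using pi_pos.le
  have hz' : 0 < ‖z‖ := norm_pos_iff.2 hz
  set w : ℂ := (‖z‖⁻¹ : ℝ) * z with hw
  have hw_norm : ‖w‖ = 1 := by
    rw [hw, norm_mul, norm_real, Real.norm_eq_abs, abs_inv, abs_norm, inv_mul_cancel₀ hz'.ne']
  have hw0 : w ≠ 0 := norm_ne_zero_iff.1 (hw_norm ▸ one_ne_zero)
  -- projecting `z` radially onto the unit circle moves it by `|‖z‖ - 1| ≤ ‖z - 1‖`
  have hwz : ‖w - z‖ ≤ ‖z - 1‖ := by
    have : w - z = ((1 - ‖z‖ : ℝ) : ℂ) * w := by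
      have : (‖z‖ : ℂ) ≠ 0 := ofReal_ne_zero.2 hz'.ne'
      rw [hw]; push_cast; field_simp
    rw [this, norm_mul, hw_norm, mul_one, norm_real, Real.norm_eq_abs, ← norm_one (α := ℂ),
      abs_sub_comm]
    exact abs_norm_sub_norm_le z 1
  calc |arg z| = InnerProductGeometry.angle w 1 := by
        rw [angle_one_right hw0, hw, arg_real_mul z (inv_pos.2 hz')]
    _ ≤ π / 2 * ‖w - 1‖ := angle_le_mul_norm_sub hw_norm norm_one
    _ ≤ π / 2 * (‖w - z‖ + ‖z - 1‖) := by gcongr; exact norm_sub_le_norm_sub_add_norm_sub w z 1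
    _ ≤ π * ‖z - 1‖ := by nlinarith [pi_pos]

theorem norm_le_norm_add_I {z : ℂ} (hz : 0 ≤ z.im) : ‖z‖ ≤ ‖z + I‖ := by
  rw [norm_def, norm_def]
  gcongr
  simp only [normSq_apply, add_re, add_im, I_re, I_im]
  nlinarith

theorem one_le_norm_add_I {z : ℂ} (hz : 0 ≤ z.im) : 1 ≤ ‖z + I‖ := by
  calc (1 : ℝ) ≤ |(z + I).im| := by rw [add_im, I_im]; exact le_abs.2 (Or.inl (by linarith))
    _ ≤ ‖z + I‖ := abs_im_le_norm _

end Complex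

open Complex

theorem angDist_arg_arg {u v : ℂ} (hu : u ≠ 0) (hv : v ≠ 0) :
    angDist (arg u) (arg v) = |arg (u / v)| := by
  rw [angDist, Real.Angle.coe_sub, ← arg_div_coe_angle hu hv, arg_coe_angle_toReal_eq_arg]

theorem angDist_arg_arg_le {u v : ℂ} (hu : u ≠ 0) (hv : v ≠ 0) :
    angDist (arg u) (arg v) ≤ π * (‖u - v‖ / ‖v‖) := by
  rw [angDist_arg_arg hu hv, ← norm_div, sub_div, div_self hv]
  exact abs_arg_le_pi_mul_norm_sub_one _

def cayley (z : ℂ) : ℂ := (z - I) / (z + I)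

theorem theta_eq_arg_cayley (g : SL2R) :
    theta g = arg (cayley (g • UpperHalfPlane.I : UpperHalfPlane)) :=
  rfl

theorem normSq_cayley (z : ℂ) :
    normSq (cayley z) = (normSq z + 1 - 2 * z.im) / (normSq z + 1 + 2 * z.im) := by
  rw [cayley, map_div₀]
  congr 1 <;> simp only [normSq_apply, add_re, add_im, sub_re, sub_im, I_re, I_im] <;> ring

theorem cayley_ne_zero {z : UpperHalfPlane} (hz : z ≠ UpperHalfPlane.I) : cayley z ≠ 0 :=
  div_ne_zero (sub_ne_zero.2 fun h ↦ hz (UpperHalfPlane.ext h))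
    (norm_pos_iff.1 (one_pos.trans_le (one_le_norm_add_I z.im_pos.le)))

theorem cayley_sub_cayley {z w : ℂ} (hz : z + I ≠ 0) (hw : w + I ≠ 0) :
    cayley w - cayley z = 2 * I * (w - z) / ((w + I) * (z + I)) := by
  rw [cayley, cayley]
  field_simp
  ring

theorem norm_cayley_real_mul_sub_le {z : ℂ} (hz : 0 ≤ z.im) {r : ℝ} (hr : 0 ≤ r) :
    ‖cayley (r * z) - cayley z‖ ≤ 2 * |r - 1| := by
  have hz1 := one_le_norm_add_I hz
  have hrz1 := one_le_norm_add_I (z := r * z) (by simpa using mul_nonneg hr hz)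
  rw [cayley_sub_cayley (norm_pos_iff.1 (one_pos.trans_le hz1))
      (norm_pos_iff.1 (one_pos.trans_le hrz1)),
    show (r : ℂ) * z - z = ((r - 1 : ℝ) : ℂ) * z by push_cast; ring]
  simp only [norm_div, norm_mul, Complex.norm_ofNat, norm_I, norm_real, Real.norm_eq_abs]
  rw [div_le_iff₀ (by positivity)]
  calc 2 * 1 * (|r - 1| * ‖z‖) ≤ 2 * |r - 1| * (1 * ‖z + I‖) := by
        rw [mul_one, one_mul, mul_assoc]; gcongr; exact norm_le_norm_add_I hz
    _ ≤ 2 * |r - 1| * (‖r * z + I‖ * ‖z + I‖) := by gcongr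

theorem coe_aMat_smul (s : ℝ) (z : UpperHalfPlane) :
    ((aMat s • z : UpperHalfPlane) : ℂ) = Real.exp s * z := by
  rw [UpperHalfPlane.specialLinearGroup_apply]
  simp only [aMat, Algebra.algebraMap_self, of_apply, cons_val', cons_val_zero, cons_val_one,
    cons_val_fin_one, RingHom.id_apply, ofReal_exp, ofReal_div, ofReal_neg, ofReal_ofNat,
    ofReal_zero, zero_mul, zero_add, add_zero]
  rw [div_eq_iff (Complex.exp_ne_zero _), mul_right_comm, ← Complex.exp_add]
  ring_nf

theorem normSq_smul_I_add_one (g : SL2R) :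
    normSq (g • UpperHalfPlane.I : UpperHalfPlane) + 1
      = fnormSq g * (g • UpperHalfPlane.I : UpperHalfPlane).im := by
  have hdet : g 0 0 * g 1 1 - g 0 1 * g 1 0 = 1 := by
    rw [← Matrix.det_fin_two]; exact g.det_coe
  have hcd : g 1 1 ^ 2 + g 1 0 ^ 2 ≠ 0 := by
    intro h
    have h0 : g 1 0 = 0 := by nlinarith
    have h1 : g 1 1 = 0 := by nlinarith
    simp [h0, h1] at hdet
  rw [UpperHalfPlane.specialLinearGroup_apply]
  simp only [UpperHalfPlane.coe_I, UpperHalfPlane.im, fnormSq, map_div₀, div_im, normSq_apply,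
    Algebra.algebraMap_self_apply, add_re, add_im, mul_re, mul_im, I_re, I_im, ofReal_re,
    ofReal_im, mul_zero, mul_one, sub_zero, add_zero, zero_add]
  field_simp
  rw [hdet, mul_one]
  ring

theorem normSq_cayley_smul_I (g : SL2R) :
    normSq (cayley (g • UpperHalfPlane.I : UpperHalfPlane))
      = (fnormSq g - 2) / (fnormSq g + 2) := by
  have him := (g • UpperHalfPlane.I).im_pos
  rw [normSq_cayley, normSq_smul_I_add_one, UpperHalfPlane.coe_im]
  field_simp

theorem half_le_norm_cayley_smul_I {g : SL2R} (hg : 10 / 3 ≤ fnormSq g) :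
    1 / 2 ≤ ‖cayley (g • UpperHalfPlane.I : UpperHalfPlane)‖ := by
  rw [norm_def, normSq_cayley_smul_I]
  apply Real.le_sqrt_of_sq_le
  rw [le_div_iff₀ (by linarith)]
  linarith

/-- Lemma 2.6: left multiplication by `a_s`, `|s| < δ`, changes the
angle `θ_g` by at most `O(δ)`. -/
theorem theta_left_perturbation :
    ∃ C > (0:ℝ), ∃ δ₀ : ℝ, 0 < δ₀ ∧ δ₀ < 1 ∧
      ∀ δ s : ℝ, 0 < δ → δ < δ₀ → |s| < δ → ∀ g : SL2R,
        3 < fnorm g →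
        g • UpperHalfPlane.I ≠ UpperHalfPlane.I →
        (aMat s * g) • UpperHalfPlane.I ≠ UpperHalfPlane.I →
        angDist (theta (aMat s * g)) (theta g) ≤ C * δ := by
  refine ⟨8 * π, by positivity, 1 / 2, by norm_num, by norm_num, ?_⟩
  intro δ s _ hδ hs g hg hne hne'
  have hv : 1 / 2 ≤ ‖cayley (g • UpperHalfPlane.I : UpperHalfPlane)‖ := by
    refine half_le_norm_cayley_smul_I ?_
    have := (Real.lt_sqrt (by norm_num)).1 hg
    linarith
  have huv : ‖cayley ((aMat s * g) • UpperHalfPlane.I : UpperHalfPlane)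
      - cayley (g • UpperHalfPlane.I : UpperHalfPlane)‖ ≤ 4 * δ := by
    rw [mul_smul, coe_aMat_smul]
    calc _ ≤ 2 * |Real.exp s - 1| :=
          norm_cayley_real_mul_sub_le (g • UpperHalfPlane.I).im_pos.le (Real.exp_pos s).le
      _ ≤ 2 * (2 * |s|) := by gcongr; exact Real.abs_exp_sub_one_le (by linarith)
      _ ≤ 4 * δ := by linarith
  rw [theta_eq_arg_cayley, theta_eq_arg_cayley]
  calc _ ≤ π * (4 * δ / (1 / 2)) :=
        (angDist_arg_arg_le (cayley_ne_zero hne') (cayley_ne_zero hne)).trans (by gcongr)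
    _ = 8 * π * δ := by ring
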